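/- Let ℙ_Λ be the set of perfect paths in a monomial algebra Λ, partially ordered by p ⪯ q iff p is a left divisor of q. Then in the Hasse quiver H(ℙ_Λ, ⪯), every vertex has at most one direct predecessor and at most one direct successor; consequently H(ℙ_Λ, ⪯) is a disjoint union of Dynkin quivers of type A. -/

import Mathlib

/-! Combinatorial model of a monomial algebra `Λ = KQ/I`.

A finite quiver is given by source and target maps on a type of arrows.
A (nontrivial) path is encoded as a nonempty list of composable arrows;
the admissible monomial ideal `I` is encoded by its set `F` of minimal
generating paths, and a path is zero in `Λ` iff it contains a member of
`F` as a contiguous subpath (infix). -/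

/-- A quiver structure on arrow type `E` with vertex type `V`. -/
structure QuiverData (V E : Type) where
  src : E → V
  tgt : E → V

namespace QuiverData

variable {V E : Type} (Q : QuiverData V E)

/-- `l` is the list of arrows of a path of `Q`. -/
def IsPath (l : List E) : Prop := l.Chain' fun a b => Q.tgt a = Q.src b

/-- Two paths are composable: the target of the first equals the source of
the second (vacuously true if one of them is trivial). -/
def Composable (l m : List E) : Prop :=
  ∀ a ∈ l.getLast?, ∀ b ∈ m.head?, Q.tgt a = Q.src b

end QuiverData

/-- A monomial algebra, encoded combinatorially: a finite quiver together with
the set `F` of minimal paths generating the admissible monomial ideal `I`. -/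
structure MonomialData (V E : Type) extends QuiverData V E where
  F : Set (List E)
  F_path : ∀ f ∈ F, toQuiverData.IsPath f
  F_len : ∀ f ∈ F, 2 ≤ f.length
  F_min : ∀ f ∈ F, ∀ g, g <:+: f → (∃ f' ∈ F, f' <:+: g) → g = f
  admissible : ∃ N, ∀ l, toQuiverData.IsPath l → N ≤ l.length → ∃ f ∈ F, f <:+: l

namespace MonomialData

variable {V E : Type} (M : MonomialData V E)

/-- The path `l` is zero in `Λ`. -/
def IsZero (l : List E) : Prop := ∃ f ∈ M.F, f <:+: l

/-- `l` is a path which is nonzero in `Λ`. -/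
def Nonzero (l : List E) : Prop := M.toQuiverData.IsPath l ∧ ¬ M.IsZero l

/-- A perfect pair of nonzero nontrivial paths, after Chen–Shen–Zhou. -/
def PerfectPair (p q : List E) : Prop :=
  p ≠ [] ∧ q ≠ [] ∧ M.Nonzero p ∧ M.Nonzero q ∧
  M.toQuiverData.Composable p q ∧ M.IsZero (p ++ q) ∧
  (∀ q', q' ≠ [] → M.Nonzero q' → M.toQuiverData.Composable p q' →
      M.IsZero (p ++ q') → q <+: q') ∧
  (∀ p', p' ≠ [] → M.Nonzero p' → M.toQuiverData.Composable p' q →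
      M.IsZero (p' ++ q) → p <:+ p')

/-- A perfect path: a path appearing in a perfect path sequence
`(p₁, …, pₙ, pₙ₊₁ = p₁)`, encoded by a periodic sequence of paths each of
whose consecutive pairs is perfect. -/
def IsPerfect (p : List E) : Prop :=
  ∃ (n : ℕ) (s : ℕ → List E), 0 < n ∧ s 0 = p ∧ (∀ i, s (i + n) = s i) ∧
    ∀ i, M.PerfectPair (s i) (s (i + 1))

/-- `c` is the underlying cycle associated with the perfect path `p`:
the shortest cycle `c` with `p₁ ⋯ pₙ = cˡ` for some `l > 0`, for a perfect
path sequence through `p`. -/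
def IsUnderlyingCycleOf (c p : List E) : Prop :=
  ∃ (n : ℕ) (s : ℕ → List E), 0 < n ∧ s 0 = p ∧ (∀ i, s (i + n) = s i) ∧
    (∀ i, M.PerfectPair (s i) (s (i + 1))) ∧
    (∃ l, 0 < l ∧ ((List.range n).map s).flatten = (List.replicate l c).flatten) ∧
    (∀ c' l', 0 < l' → ((List.range n).map s).flatten = (List.replicate l' c').flatten →
      c.length ≤ c'.length)


/-- There is an overlap between the perfect paths `p` and `q` (`p` overlaps `q`). -/
def Overlap (p q : List E) : Prop :=
  ∃ x p' q' : List E, x ≠ [] ∧ p = p' ++ x ∧ q = x ++ q' ∧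
    M.Nonzero (p' ++ x ++ q') ∧ (p = q → p' ≠ [] ∧ q' ≠ [])

/-- An elementary perfect path: a source in the Hasse quiver of the left
divisibility order `⪯` on perfect paths, i.e. it is not a proper left divisor
of any perfect path. -/
def Elementary (p : List E) : Prop :=
  M.IsPerfect p ∧ ¬ ∃ q, M.IsPerfect q ∧ p <+: q ∧ p ≠ q

/-- A co-elementary perfect path: a sink in the Hasse quiver of `⪯`, i.e.
no proper left divisor of it is perfect. -/
def CoElementary (p : List E) : Prop :=
  M.IsPerfect p ∧ ¬ ∃ q, M.IsPerfect q ∧ q <+: p ∧ q ≠ p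

/-- There is an arrow `q ⟶ p` in the Hasse quiver of `(ℙ_Λ, ⪯)`:
`p ≺ q` and no perfect path lies strictly between them. -/
def HasseArrowPrec (q p : List E) : Prop :=
  M.IsPerfect p ∧ M.IsPerfect q ∧ p <+: q ∧ p ≠ q ∧
    ¬ ∃ r, M.IsPerfect r ∧ p <+: r ∧ p ≠ r ∧ r <+: q ∧ r ≠ q

end MonomialData

/-- Two cycles are equivalent (agree up to cyclic permutation): each is a
subpath of a power of the other. -/
def CyclesEquiv {E : Type} (c d : List E) : Prop :=
  ∃ m k, 0 < m ∧ 0 < k ∧ c <:+: (List.replicate m d).flatten ∧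
    d <:+: (List.replicate k c).flatten

/-! Let `(p, z)` and `(q, y)` be perfect pairs with `q = p t`, `t` nonempty. The path `t y` is
nonzero, for otherwise `t`, shorter than `q`, would be a left partner of `y`. As `p (t y) = q y`
is zero, the right-minimality of `z` gives `z ⪯ t y`, and `z ⋠ t` because `p z` is zero while `q`
is not; hence `t ⪯ z`. So the perfect paths above `p` are left divisors of `p z`, and like the
left divisors of any path they form a chain, in which an element has at most one cover on
either side. -/

namespace QuiverData

variable {V E : Type} (Q : QuiverData V E)

lemma isPath_append {l m : List E} :
    Q.IsPath (l ++ m) ↔ Q.IsPath l ∧ Q.IsPath m ∧ Q.Composable l m :=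
  List.isChain_append

end QuiverData

namespace MonomialData

variable {V E : Type} {M : MonomialData V E}

lemma IsZero.mono {l m : List E} (hl : M.IsZero l) (hlm : l <:+: m) : M.IsZero m :=
  let ⟨f, hf, hfl⟩ := hl
  ⟨f, hf, hfl.trans hlm⟩

lemma Nonzero.infix {l m : List E} (hl : M.Nonzero l) (hm : m <:+: l) : M.Nonzero m :=
  ⟨hl.1.infix hm, fun hz => hl.2 (hz.mono hm)⟩

lemma IsPerfect.exists_perfectPair {p : List E} (hp : M.IsPerfect p) :
    ∃ z, M.PerfectPair p z := by
  obtain ⟨_, s, -, rfl, -, hs⟩ := hp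
  exact ⟨s 1, hs 0⟩

lemma PerfectPair.isPath_append {p z : List E} (h : M.PerfectPair p z) :
    M.IsPath (p ++ z) :=
  (M.isPath_append).2 ⟨h.2.2.1.1, h.2.2.2.1.1, h.2.2.2.2.1⟩

lemma PerfectPair.nonzero_suffix_append {p t y : List E} (h : M.PerfectPair (p ++ t) y)
    (hp : p ≠ []) (ht : t ≠ []) : M.Nonzero (t ++ y) := by
  have hty : M.IsPath (t ++ y) := by
    have hqy := h.isPath_append
    rw [List.append_assoc, M.isPath_append] at hqy
    exact hqy.2.1
  obtain ⟨-, -, hq, -, -, -, -, hleft⟩ := h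
  refine ⟨hty, fun hzero => hp ?_⟩
  have hsuffix := hleft t ht (hq.infix (List.suffix_append p t).isInfix)
    ((M.isPath_append).1 hty).2.2 hzero
  simpa using hsuffix.length_le

lemma PerfectPair.prefix_append_of_prefix {p z q y : List E} (hpz : M.PerfectPair p z)
    (hqy : M.PerfectPair q y) (hpq : p <+: q) : q <+: p ++ z := by
  obtain ⟨t, rfl⟩ := hpq
  rcases eq_or_ne t [] with rfl | ht
  · simp
  refine (List.prefix_append_right_inj p).2 ?_
  have hty := hqy.nonzero_suffix_append hpz.1 ht
  have hcomp : M.Composable p (t ++ y) := by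
    have hpty := hqy.isPath_append
    rw [List.append_assoc, M.isPath_append] at hpty
    exact hpty.2.2
  obtain ⟨-, -, ⟨-, hq_nonzero⟩, -, -, hqy_zero, -, -⟩ := hqy
  obtain ⟨-, -, -, -, -, hpz_zero, hright, -⟩ := hpz
  have hz_prefix : z <+: t ++ y :=
    hright _ (by simp [ht]) hty hcomp (by simpa using hqy_zero)
  have hz_not_prefix : ¬ z <+: t := fun hzt =>
    hq_nonzero (hpz_zero.mono ((List.prefix_append_right_inj p).2 hzt).isInfix)
  exact (List.prefix_or_prefix_of_prefix (List.prefix_append t y) hz_prefix).resolve_right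
    hz_not_prefix

lemma HasseArrowPrec.eq_or_eq_of_prefix {p q r : List E} (h : M.HasseArrowPrec q p)
    (hr : M.IsPerfect r) (hpr : p <+: r) (hrq : r <+: q) : r = p ∨ r = q := by
  by_contra! hne
  exact h.2.2.2.2 ⟨r, hr, hpr, hne.1.symm, hrq, hne.2⟩

end MonomialData

/-- in the Hasse quiver of `(ℙ_Λ, ⪯)` every vertex has at most
one direct predecessor and at most one direct successor; hence the Hasse
quiver is a disjoint union of Dynkin quivers of type `𝔸`. -/
theorem hasse_prec_local_structure {V E : Type} (M : MonomialData V E) :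
    (∀ p q r : List E, M.HasseArrowPrec q p → M.HasseArrowPrec r p → q = r) ∧
    (∀ p q r : List E, M.HasseArrowPrec p q → M.HasseArrowPrec p r → q = r) := by
  constructor
  · intro p q r hq hr
    have ⟨hp, hqP, hpq, hpq_ne, _⟩ := hq
    have ⟨_, hrP, hpr, hpr_ne, _⟩ := hr
    obtain ⟨z, hpz⟩ := hp.exists_perfectPair
    have above {s} (hs : M.IsPerfect s) (hps : p <+: s) : s <+: p ++ z :=
      have ⟨_, hsy⟩ := hs.exists_perfectPair
      hpz.prefix_append_of_prefix hsy hps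
    rcases List.prefix_or_prefix_of_prefix (above hqP hpq) (above hrP hpr) with hqr | hrq
    · exact (hr.eq_or_eq_of_prefix hqP hpq hqr).resolve_left hpq_ne.symm
    · exact ((hq.eq_or_eq_of_prefix hrP hpr hrq).resolve_left hpr_ne.symm).symm
  · intro p q r hq hr
    have ⟨hqP, _, hqp, hqp_ne, _⟩ := hq
    have ⟨hrP, _, hrp, hrp_ne, _⟩ := hr
    rcases List.prefix_or_prefix_of_prefix hqp hrp with hqr | hrq
    · exact ((hq.eq_or_eq_of_prefix hrP hqr hrp).resolve_right hrp_ne).symm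
    · exact (hr.eq_or_eq_of_prefix hqP hrq hqp).resolve_right hqp_ne
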